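/- arXiv:2406.10071 — 7 statements merged into one kernel-verified Lean document; each statement's English description precedes it below -/
import Mathlib

section
/- Let X, B be groups, φ : B → Aut(X) an action, and P_X ⊆ X, P_B ⊆ B submonoids (positive cones of right-preorders). If P is a submonoid of the semidirect product X ⋊_φ B such that: (a) (x,0) ∈ P if and only if x ∈ P_X, (b) b ∈ P_B implies (0,b) ∈ P, and (c) (x,b) ∈ P implies b ∈ P_B, then P_X × P_B ⊆ P and P ⊆ P_lex, where P_lex = {(x,b) | (b ∈ P_B and -b ∉ P_B) or (b ∈ P_B and -b ∈ P_B and x ∈ P_X)}. -/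
/-- Any compatible cone `P` on the semidirect product `X ⋊_φ B` lies between the
product cone `P_X × P_B` and the lexicographic cone `P_lex`. -/
theorem compatible_cone_between_prod_and_lex
    (X B : Type*) [AddGroup X] [AddGroup B]
    (φ : B → X ≃+ X) (hφ0 : ∀ x, φ 0 x = x)
    (hφadd : ∀ a b x, φ (a + b) x = φ a (φ b x))
    (PX : AddSubmonoid X) (PB : AddSubmonoid B)
    (P : Set (X × B))
    -- P is a submonoid of X ⋊_φ B
    (hzero : ((0 : X), (0 : B)) ∈ P)
    (hadd : ∀ p q : X × B, p ∈ P → q ∈ P →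
      (p.1 + φ p.2 q.1, p.2 + q.2) ∈ P)
    -- (a) kernel condition
    (ha : ∀ x : X, (x, (0 : B)) ∈ P ↔ x ∈ PX)
    -- (b) section monotone
    (hb : ∀ b : B, b ∈ PB → ((0 : X), b) ∈ P)
    -- (c) projection monotone
    (hc : ∀ p : X × B, p ∈ P → p.2 ∈ PB) :
    (∀ x b, x ∈ PX → b ∈ PB → (x, b) ∈ P) ∧
    (∀ x b, (x, b) ∈ P →
      (b ∈ PB ∧ -b ∉ PB) ∨ (b ∈ PB ∧ -b ∈ PB ∧ x ∈ PX)) := by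
  constructor
  · intro x b hx hbB
    have h := hadd (x, 0) (0, b) ((ha x).2 hx) (hb b hbB)
    simpa [hφ0] using h
  · intro x b hxb
    have hbB := hc _ hxb
    by_cases hnb : -b ∈ PB
    · right
      refine ⟨hbB, hnb, ?_⟩
      have h := hadd (x, b) (0, -b) hxb (hb _ hnb)
      simp only [map_zero, add_zero, add_neg_cancel] at h
      exact (ha x).1 h
    · exact Or.inl ⟨hbB, hnb⟩
end

section
/- Let X, B be groups with submonoids P_X ⊆ X, P_B ⊆ B, and φ : B → Aut(X) an action. The set P_lex = {(x,b) ∈ X ⋊_φ B | (b ∈ P_B and -b ∉ P_B) or (b ∈ P_B and -b ∈ P_B and x ∈ P_X)} is a submonoid of the semidirect product X ⋊_φ B if and only if for every b ∈ P_B such that there exists b' ∈ P_B with b + b' ∈ P_B and -(b + b') ∈ P_B, the automorphism φ_b maps P_X into P_X. -/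
/-- The lexicographic cone `P_lex` is a submonoid of `X ⋊_φ B` iff for every
`b ∈ P_B` with `b + b' ∼ 0` for some `b' ∈ P_B`, the automorphism `φ_b` maps
`P_X` into `P_X`. -/
theorem lex_cone_submonoid_iff
    (X B : Type*) [AddGroup X] [AddGroup B]
    (φ : B → X ≃+ X) (hφ0 : ∀ x, φ 0 x = x)
    (hφadd : ∀ a b x, φ (a + b) x = φ a (φ b x))
    (PX : AddSubmonoid X) (PB : AddSubmonoid B) :
    (let Plex : Set (X × B) := {p | (p.2 ∈ PB ∧ -p.2 ∉ PB) ∨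
        (p.2 ∈ PB ∧ -p.2 ∈ PB ∧ p.1 ∈ PX)}
     ((0 : X), (0 : B)) ∈ Plex ∧
     ∀ p q : X × B, p ∈ Plex → q ∈ Plex →
       (p.1 + φ p.2 q.1, p.2 + q.2) ∈ Plex) ↔
    (∀ b : B, b ∈ PB →
      (∃ b' ∈ PB, b + b' ∈ PB ∧ -(b + b') ∈ PB) →
      ∀ x ∈ PX, φ b x ∈ PX) := by
  set Plex : Set (X × B) := {p | (p.2 ∈ PB ∧ -p.2 ∉ PB) ∨ (p.2 ∈ PB ∧ -p.2 ∈ PB ∧ p.1 ∈ PX)} with hP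
  constructor
  · rintro ⟨-, hcl⟩ b hb ⟨b', hb', hbb', hnbb'⟩ x hx
    have hp : ((0 : X), b) ∈ Plex := by
      by_cases h : -b ∈ PB
      · exact Or.inr ⟨hb, h, PX.zero_mem⟩
      · exact Or.inl ⟨hb, h⟩
    have hq : (x, (0 : B)) ∈ Plex := Or.inr ⟨PB.zero_mem, by simpa using PB.zero_mem, hx⟩
    have h1 := hcl _ _ hp hq
    have hr : ((0 : X), b') ∈ Plex := by
      by_cases h : -b' ∈ PB
      · exact Or.inr ⟨hb', h, PX.zero_mem⟩
      · exact Or.inl ⟨hb', h⟩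
    have h2 := hcl _ _ h1 hr
    simp only [zero_add, add_zero, map_zero] at h2
    rcases h2 with ⟨-, h⟩ | ⟨-, -, h⟩
    · exact absurd hnbb' h
    · exact h
  · intro H
    refine ⟨Or.inr ⟨PB.zero_mem, by simpa using PB.zero_mem, PX.zero_mem⟩, ?_⟩
    rintro ⟨x, b⟩ ⟨y, c⟩ hp hq
    have hb : b ∈ PB := hp.elim And.left And.left
    have hc : c ∈ PB := hq.elim And.left And.left
    by_cases hn : -(b + c) ∈ PB
    · have hnb : -b ∈ PB := by
        have := PB.add_mem hc hn
        simpa [neg_add_rev, add_assoc] using this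
      have hnc : -c ∈ PB := by
        have := PB.add_mem hn hb
        simpa [neg_add_rev, add_assoc] using this
      have hx : x ∈ PX := by
        rcases hp with ⟨-, h⟩ | ⟨-, -, h⟩
        · exact absurd hnb h
        · exact h
      have hy : y ∈ PX := by
        rcases hq with ⟨-, h⟩ | ⟨-, -, h⟩
        · exact absurd hnc h
        · exact h
      exact Or.inr ⟨PB.add_mem hb hc, hn,
        PX.add_mem hx (H b hb ⟨c, hc, PB.add_mem hb hc, hn⟩ y hy)⟩
    · exact Or.inl ⟨PB.add_mem hb hc, hn⟩
end

section
/- Consider the action φ of ℤ on ℤ given by φ_b(x) = (-1)^b · x, and the semidirect product ℤ ⋊_φ ℤ. There is no submonoid P of ℤ ⋊_φ ℤ satisfying: (a) (x,0) ∈ P iff x ∈ ℕ, and (b) (0,b) ∈ P for all b ∈ ℤ. That is, no compatible right-preorder exists on ℤ ⋊_φ ℤ with kernel cone ℕ and codomain cone all of ℤ. -/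
/-- For `φ_b(x) = (-1)^b x` on `ℤ ⋊_φ ℤ`, there is no compatible cone `P` with
kernel cone `ℕ` and codomain cone all of `ℤ`. -/
theorem no_compatible_cone_zsemidirect :
    ¬ ∃ P : Set (ℤ × ℤ),
      (((0 : ℤ), (0 : ℤ)) ∈ P ∧
        ∀ p q : ℤ × ℤ, p ∈ P → q ∈ P →
          (p.1 + ((-1 : ℤˣ) ^ p.2 : ℤˣ) * q.1, p.2 + q.2) ∈ P) ∧
      (∀ x : ℤ, ((x, (0 : ℤ)) ∈ P ↔ 0 ≤ x)) ∧
      (∀ b : ℤ, ((0 : ℤ), b) ∈ P) := by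
  rintro ⟨P, ⟨-, hmul⟩, hker, hall⟩
  have h1 : ((1 : ℤ), (0 : ℤ)) ∈ P := (hker 1).2 one_pos.le
  have h2 := hmul (0, 1) (1, 0) (hall 1) h1
  simp only at h2
  norm_num at h2
  have h3 := hmul (-1, 1) (0, -1) h2 (hall (-1))
  norm_num at h3
  exact absurd ((hker (-1)).1 h3) (by norm_num)
end

section
/- For the action φ of ℤ on ℚ given by φ_b(x) = q^b · x with q a negative rational number (q ≠ 0), there is no submonoid P of ℚ ⋊_φ ℤ which is closed under conjugation, contains {(x,0) | x ∈ ℚ, x ≥ 0} and {(0,b) | b ∈ ℕ}, and satisfies (x,0) ∈ P iff x ≥ 0. In other words, the semidirect product ℚ ⋊_φ ℤ admits no compatible two-sided preorder extending the given cones. -/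
/-- For `φ_b(x) = q^b x` with `q < 0`, the semidirect product `ℚ ⋊_φ ℤ` admits
no compatible two-sided preorder (conjugation-closed cone) extending the cones
`ℚ⁺` on `ℚ` and `ℕ` on `ℤ`. -/
theorem no_twoSided_cone_qsemidirect (q : ℚ) (hq : q < 0) (hq0 : q ≠ 0) :
    ¬ ∃ P : Set (ℚ × ℤ),
      -- P is a submonoid
      (((0 : ℚ), (0 : ℤ)) ∈ P ∧
        ∀ p r : ℚ × ℤ, p ∈ P → r ∈ P →
          (p.1 + q ^ p.2 * r.1, p.2 + r.2) ∈ P) ∧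
      -- P is closed under conjugation: g + p + (-g) ∈ P
      (∀ g p : ℚ × ℤ, p ∈ P →
        (let s : ℚ × ℤ := (g.1 + q ^ g.2 * p.1, g.2 + p.2)
         let ginv : ℚ × ℤ := (-(q ^ (-g.2) * g.1), -g.2)
         (s.1 + q ^ s.2 * ginv.1, s.2 + ginv.2) ∈ P)) ∧
      -- contains the section of ℕ
      (∀ n : ℕ, ((0 : ℚ), (n : ℤ)) ∈ P) ∧
      -- kernel cone is exactly the nonnegative rationals
      (∀ x : ℚ, ((x, (0 : ℤ)) ∈ P ↔ 0 ≤ x)) := by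
  rintro ⟨P, ⟨-, -⟩, hconj, -, hker⟩
  have h1 : ((1 : ℚ), (0 : ℤ)) ∈ P := (hker 1).mpr zero_le_one
  have h := hconj (0, 1) (1, 0) h1
  simp only [zpow_one] at h
  norm_num at h
  exact absurd ((hker q).mp h) (not_le.mpr hq)
end

section
/- For the action φ of ℤ on ℚ given by φ_b(x) = q^b x with q < 0, the lexicographic cone P_lex = {(x,b) ∈ ℚ ⋊_φ ℤ | b > 0, or (b = 0 and x ≥ 0)} is a submonoid of ℚ ⋊_φ ℤ, so ℚ ⋊_φ ℤ is a right-preordered group; but P_lex is not closed under conjugation, hence the corresponding right-preorder is not a two-sided preorder. -/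
/-- For `φ_b(x) = q^b x` with `q < 0`, the lexicographic cone is a submonoid of
`ℚ ⋊_φ ℤ` (so the semidirect product is right-preordered), but it is not closed
under conjugation, hence the right-preorder is not two-sided. -/
theorem lex_cone_qsemidirect_not_conjClosed (q : ℚ) (hq : q < 0) :
    (let Plex : Set (ℚ × ℤ) := {p | 0 < p.2 ∨ (p.2 = 0 ∧ 0 ≤ p.1)}
     (((0 : ℚ), (0 : ℤ)) ∈ Plex ∧
       ∀ p r : ℚ × ℤ, p ∈ Plex → r ∈ Plex →
         (p.1 + q ^ p.2 * r.1, p.2 + r.2) ∈ Plex) ∧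
     -- not closed under conjugation
     ¬ (∀ g p : ℚ × ℤ, p ∈ Plex →
        (let s : ℚ × ℤ := (g.1 + q ^ g.2 * p.1, g.2 + p.2)
         let ginv : ℚ × ℤ := (-(q ^ (-g.2) * g.1), -g.2)
         (s.1 + q ^ s.2 * ginv.1, s.2 + ginv.2) ∈ Plex))) := by
  refine ⟨⟨Or.inr ⟨rfl, le_refl _⟩, ?_⟩, ?_⟩
  · rintro p r (hp | ⟨hp2, hp1⟩) (hr | ⟨hr2, hr1⟩)
    · exact Or.inl (by positivity)
    · exact Or.inl (by omega)
    · exact Or.inl (by omega)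
    · refine Or.inr ⟨by omega, ?_⟩
      simp only [hp2, zpow_zero, one_mul]
      linarith
  · intro h
    have := h ((0 : ℚ), (1 : ℤ)) ((1 : ℚ), (0 : ℤ)) (Or.inr ⟨rfl, zero_le_one⟩)
    simp only [Set.mem_setOf_eq] at this
    rcases this with h1 | ⟨_, h2⟩
    · omega
    · simp [zpow_one] at h2
      linarith
end

section
/- Let M be a submonoid of a group G and b ∈ M an element such that there are no u, v ∈ M with u + b + v = 0. Then in the monoid M × ⟨b⟩₊ (where ⟨b⟩₊ = {n·b | n ∈ ℕ}), the element (0, b) does not belong to the submonoid generated by M × {0} and the diagonal {(n·b, n·b) | n ∈ ℕ}. -/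
/-- Key step in characterizing strongly unital objects: if `b ∈ M` admits no
`u, v ∈ M` with `u + b + v = 0`, then `(0, b)` is not in the submonoid of
`G × G` generated by `M × {0}` and the diagonal `{(n • b, n • b) | n : ℕ}`. -/
theorem zero_b_not_in_generated_submonoid (G : Type*) [AddGroup G]
    (M : AddSubmonoid G) (b : G) (hb : b ∈ M)
    (h : ¬ ∃ u ∈ M, ∃ v ∈ M, u + b + v = 0) :
    ((0 : G), b) ∉ AddSubmonoid.closure
      ({p : G × G | ∃ y ∈ M, p = (y, 0)} ∪
       {p : G × G | ∃ n : ℕ, p = (n • b, n • b)}) := by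
  intro hmem
  have key : ∀ p : G × G, p ∈ AddSubmonoid.closure
      ({p : G × G | ∃ y ∈ M, p = (y, 0)} ∪
       {p : G × G | ∃ n : ℕ, p = (n • b, n • b)}) →
      ∃ n : ℕ, p.2 = n • b ∧ p.1 ∈ M ∧
        (n ≠ 0 → ∃ u ∈ M, ∃ v ∈ M, p.1 = u + b + v) := by
    intro p hp
    induction hp using AddSubmonoid.closure_induction with
    | mem q hq =>
      rcases hq with ⟨y, hy, rfl⟩ | ⟨n, rfl⟩
      · exact ⟨0, by simp, hy, fun h0 => absurd rfl h0⟩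
      · refine ⟨n, rfl, AddSubmonoid.nsmul_mem M hb n, fun h0 => ?_⟩
        obtain ⟨m, rfl⟩ := Nat.exists_eq_succ_of_ne_zero h0
        exact ⟨0, M.zero_mem, m • b, AddSubmonoid.nsmul_mem M hb _, by
          rw [zero_add, succ_nsmul' b m]⟩
    | zero => exact ⟨0, by simp, M.zero_mem, fun h0 => absurd rfl h0⟩
    | add q r _ _ ihq ihr =>
      obtain ⟨m, hm2, hm1, hmc⟩ := ihq
      obtain ⟨n, hn2, hn1, hnc⟩ := ihr
      refine ⟨m + n, by simp [Prod.snd_add, hm2, hn2, add_nsmul], M.add_mem hm1 hn1, ?_⟩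
      intro h0
      rcases Nat.eq_zero_or_pos m with hm0 | hm0
      · obtain ⟨u, hu, v, hv, huv⟩ := hnc (by omega)
        exact ⟨q.1 + u, M.add_mem hm1 hu, v, hv, by
          simp [Prod.fst_add, huv, add_assoc]⟩
      · obtain ⟨u, hu, v, hv, huv⟩ := hmc (by omega)
        exact ⟨u, hu, v + r.1, M.add_mem hv hn1, by
          simp [Prod.fst_add, huv, add_assoc]⟩
  obtain ⟨n, hn2, _, hnc⟩ := key _ hmem
  rcases Nat.eq_zero_or_pos n with h0 | h0
  · subst h0
    simp only [zero_smul] at hn2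
    exact h ⟨0, M.zero_mem, 0, M.zero_mem, by simp [hn2]⟩
  · obtain ⟨u, hu, v, hv, huv⟩ := hnc (by omega)
    exact h ⟨u, hu, v, hv, huv.symm⟩
end

section
/- Let X, B be groups with submonoids P_X, P_B, and φ : B → Aut(X) an action such that φ_b(P_X) ⊆ P_X for all b ∈ P_B. Then P_X × P_B ⊆ P_lex, and both are submonoids of X ⋊_φ B; moreover any submonoid P of X ⋊_φ B satisfying (x,0) ∈ P ↔ x ∈ P_X, (0,b) ∈ P for b ∈ P_B, and (x,b) ∈ P → b ∈ P_B, lies between them: P_X × P_B ⊆ P ⊆ P_lex. -/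
/-- If `φ_b(P_X) ⊆ P_X` for all `b ∈ P_B`, then both the product cone and the
lexicographic cone are submonoids of `X ⋊_φ B`, with `P_prod ⊆ P_lex`, and any
compatible cone `P` satisfies `P_prod ⊆ P ⊆ P_lex`. -/
theorem prod_and_lex_cones_sandwich
    (X B : Type*) [AddGroup X] [AddGroup B]
    (φ : B → X ≃+ X) (hφ0 : ∀ x, φ 0 x = x)
    (hφadd : ∀ a b x, φ (a + b) x = φ a (φ b x))
    (PX : AddSubmonoid X) (PB : AddSubmonoid B)
    (hmono : ∀ b ∈ PB, ∀ x ∈ PX, φ b x ∈ PX) :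
    (let Pprod : Set (X × B) := {p | p.1 ∈ PX ∧ p.2 ∈ PB}
     let Plex : Set (X × B) := {p | (p.2 ∈ PB ∧ -p.2 ∉ PB) ∨
        (p.2 ∈ PB ∧ -p.2 ∈ PB ∧ p.1 ∈ PX)}
     Pprod ⊆ Plex ∧
     (((0 : X), (0 : B)) ∈ Pprod ∧ ∀ p q : X × B, p ∈ Pprod → q ∈ Pprod →
        (p.1 + φ p.2 q.1, p.2 + q.2) ∈ Pprod) ∧
     (((0 : X), (0 : B)) ∈ Plex ∧ ∀ p q : X × B, p ∈ Plex → q ∈ Plex →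
        (p.1 + φ p.2 q.1, p.2 + q.2) ∈ Plex) ∧
     (∀ P : Set (X × B),
       (((0 : X), (0 : B)) ∈ P ∧ ∀ p q : X × B, p ∈ P → q ∈ P →
          (p.1 + φ p.2 q.1, p.2 + q.2) ∈ P) →
       (∀ x : X, ((x, (0 : B)) ∈ P ↔ x ∈ PX)) →
       (∀ b : B, b ∈ PB → ((0 : X), b) ∈ P) →
       (∀ p : X × B, p ∈ P → p.2 ∈ PB) →
       Pprod ⊆ P ∧ P ⊆ Plex)) := by
  intro Pprod Plex
  refine ⟨?_, ⟨⟨PX.zero_mem, PB.zero_mem⟩, ?_⟩, ⟨?_, ?_⟩, ?_⟩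
  · rintro ⟨x, b⟩ ⟨hx, hb⟩
    by_cases h : -b ∈ PB
    · exact Or.inr ⟨hb, h, hx⟩
    · exact Or.inl ⟨hb, h⟩
  · rintro ⟨x, a⟩ ⟨y, b⟩ ⟨hx, ha⟩ ⟨hy, hb⟩
    exact ⟨PX.add_mem hx (hmono a ha y hy), PB.add_mem ha hb⟩
  · exact Or.inr ⟨PB.zero_mem, by simpa using PB.zero_mem, PX.zero_mem⟩
  · rintro ⟨x, a⟩ ⟨y, b⟩ hp hq
    have ha : a ∈ PB := hp.elim (fun h => h.1) (fun h => h.1)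
    have hb : b ∈ PB := hq.elim (fun h => h.1) (fun h => h.1)
    by_cases h : -(a + b) ∈ PB
    · have hna : -a ∈ PB := by
        have := PB.add_mem hb h
        simpa [neg_add_rev, add_neg_cancel_left] using this
      have hnb : -b ∈ PB := by
        have := PB.add_mem h ha
        simpa [neg_add_rev, add_assoc] using this
      have hx : x ∈ PX := hp.elim (fun h' => absurd hna h'.2) (fun h' => h'.2.2)
      have hy : y ∈ PX := hq.elim (fun h' => absurd hnb h'.2) (fun h' => h'.2.2)
      exact Or.inr ⟨PB.add_mem ha hb, h, PX.add_mem hx (hmono a ha y hy)⟩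
    · exact Or.inl ⟨PB.add_mem ha hb, h⟩
  · rintro P ⟨hP0, hPadd⟩ hPX hPB hP2
    constructor
    · rintro ⟨x, b⟩ ⟨hx, hb⟩
      have h1 : ((x, (0 : B)) : X × B) ∈ P := (hPX x).mpr hx
      have h2 : (((0 : X), b) : X × B) ∈ P := hPB b hb
      have := hPadd _ _ h1 h2
      simpa [hφ0] using this
    · rintro ⟨x, b⟩ hp
      have hb : b ∈ PB := hP2 _ hp
      by_cases h : -b ∈ PB
      · refine Or.inr ⟨hb, h, ?_⟩
        have h2 : (((0 : X), -b) : X × B) ∈ P := hPB _ h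
        have := hPadd _ _ hp h2
        simp only [map_zero, add_zero, add_neg_cancel] at this
        exact (hPX x).mp this
      · exact Or.inl ⟨hb, h⟩
end
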